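/- (Conservation law for W_β, homogeneous case.) Let β : ℝ³ → ℝ be a C² function with Δ_{H¹}β = 0, and let u be a C² solution of Δ_{H¹}u = 0 on an open set Ω ⊆ ℝ³. Define on Ω: W₁ = β(u_x + 2y·u_t) − u(β_x + 2y·β_t), W₂ = β(u_y − 2x·u_t) − u(β_y − 2x·β_t), W₃ = β[−2x·u_y + 2y·u_x + 4(x²+y²)u_t] + 2u[x·β_y − y·β_x − 2(x²+y²)β_t]. Then ∂W₁/∂x + ∂W₂/∂y + ∂W₃/∂t = 0 at every point of Ω. -/

import Mathlib

/-- Partial derivative with respect to the first coordinate (x). -/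
noncomputable def pdx (u : ℝ × ℝ × ℝ → ℝ) : ℝ × ℝ × ℝ → ℝ :=
  fun p => fderiv ℝ u p (1, 0, 0)

/-- Partial derivative with respect to the second coordinate (y). -/
noncomputable def pdy (u : ℝ × ℝ × ℝ → ℝ) : ℝ × ℝ × ℝ → ℝ :=
  fun p => fderiv ℝ u p (0, 1, 0)

/-- Partial derivative with respect to the third coordinate (t). -/
noncomputable def pdt (u : ℝ × ℝ × ℝ → ℝ) : ℝ × ℝ × ℝ → ℝ :=
  fun p => fderiv ℝ u p (0, 0, 1)

/-- The Kohn–Laplace operator on the Heisenberg group H¹: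
`Δ u = u_xx + u_yy + 4(x²+y²) u_tt + 4y u_xt − 4x u_yt`. -/
noncomputable def KohnLaplace (u : ℝ × ℝ × ℝ → ℝ) : ℝ × ℝ × ℝ → ℝ :=
  fun p => pdx (pdx u) p + pdy (pdy u) p
    + 4 * (p.1 ^ 2 + p.2.1 ^ 2) * pdt (pdt u) p
    + 4 * p.2.1 * pdt (pdx u) p - 4 * p.1 * pdt (pdy u) p

/-!
With the horizontal fields `X = ∂ₓ + 2y ∂ₜ`, `Y = ∂ᵧ - 2x ∂ₜ` one has `Δ_{H¹} = X² + Y²` by the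
symmetry of second derivatives, and `W = A X + B Y` with `A = β Xu - u Xβ`, `B = β Yu - u Yβ`.
Since `X` and `Y` are divergence free, `div W = XA + YB`, and the Leibniz rule turns this into
Green's identity `div W = β Δu - u Δβ`, which vanishes.
-/

section DirectionalDerivative

variable {𝕜 E F : Type*} [NontriviallyNormedField 𝕜] [NormedAddCommGroup E] [NormedSpace 𝕜 E]
  [NormedAddCommGroup F] [NormedSpace 𝕜 F] {x : E}

theorem fderiv_fun_add_apply {f g : E → F} (hf : DifferentiableAt 𝕜 f x)
    (hg : DifferentiableAt 𝕜 g x) (v : E) :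
    fderiv 𝕜 (fun y => f y + g y) x v = fderiv 𝕜 f x v + fderiv 𝕜 g x v := by
  simp [fderiv_fun_add hf hg]

theorem fderiv_fun_sub_apply {f g : E → F} (hf : DifferentiableAt 𝕜 f x)
    (hg : DifferentiableAt 𝕜 g x) (v : E) :
    fderiv 𝕜 (fun y => f y - g y) x v = fderiv 𝕜 f x v - fderiv 𝕜 g x v := by
  simp [fderiv_fun_sub hf hg]

theorem fderiv_fun_mul_apply {f g : E → 𝕜} (hf : DifferentiableAt 𝕜 f x)
    (hg : DifferentiableAt 𝕜 g x) (v : E) :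
    fderiv 𝕜 (fun y => f y * g y) x v = f x * fderiv 𝕜 g x v + g x * fderiv 𝕜 f x v := by
  simp [fderiv_fun_mul hf hg]

theorem ContDiffAt.differentiableAt_fderiv_apply {f : E → F} (hf : ContDiffAt 𝕜 2 f x)
    (w : E) : DifferentiableAt 𝕜 (fun y => fderiv 𝕜 f y w) x :=
  ((hf.fderiv_right (m := 1) (by norm_num)).differentiableAt one_ne_zero).clm_apply
    (differentiableAt_const w)

end DirectionalDerivative

section SecondDerivative

variable {𝕜 E F : Type*} [RCLike 𝕜] [NormedAddCommGroup E] [NormedSpace 𝕜 E]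
  [NormedAddCommGroup F] [NormedSpace 𝕜 F] {x : E}

theorem ContDiffAt.fderiv_fderiv_apply_comm {f : E → F} (hf : ContDiffAt 𝕜 2 f x) (v w : E) :
    fderiv 𝕜 (fun y => fderiv 𝕜 f y w) x v = fderiv 𝕜 (fun y => fderiv 𝕜 f y v) x w := by
  have hf' := (hf.fderiv_right (m := 1) (by norm_num)).differentiableAt one_ne_zero
  rw [fderiv_clm_apply hf' (differentiableAt_const w),
    fderiv_clm_apply hf' (differentiableAt_const v)]
  simpa using hf.isSymmSndFDerivAt (by simp) v w

end SecondDerivative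

section Heisenberg

variable {f g A B : ℝ × ℝ × ℝ → ℝ} {p : ℝ × ℝ × ℝ}

/-- `heisX`, `heisY` are the left-invariant horizontal vector fields `X = ∂ₓ + 2y ∂ₜ` and
`Y = ∂ᵧ - 2x ∂ₜ` of `H¹`. -/
noncomputable def heisX (f : ℝ × ℝ × ℝ → ℝ) : ℝ × ℝ × ℝ → ℝ :=
  fun q => pdx f q + 2 * q.2.1 * pdt f q

noncomputable def heisY (f : ℝ × ℝ × ℝ → ℝ) : ℝ × ℝ × ℝ → ℝ :=
  fun q => pdy f q - 2 * q.1 * pdt f q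

noncomputable def divergence (F₁ F₂ F₃ : ℝ × ℝ × ℝ → ℝ) : ℝ × ℝ × ℝ → ℝ :=
  fun q => pdx F₁ q + pdy F₂ q + pdt F₃ q

theorem fderiv_two_y_mul_apply (hA : DifferentiableAt ℝ A p) {v : ℝ × ℝ × ℝ} (hv : v.2.1 = 0) :
    fderiv ℝ (fun q => 2 * q.2.1 * A q) p v = 2 * p.2.1 * fderiv ℝ A p v := by
  rw [fderiv_fun_mul_apply (by fun_prop) hA, fderiv_const_mul (by fun_prop),
    fderiv.fst (by fun_prop), fderiv_snd]
  simp [hv]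

theorem fderiv_two_x_mul_apply (hA : DifferentiableAt ℝ A p) {v : ℝ × ℝ × ℝ} (hv : v.1 = 0) :
    fderiv ℝ (fun q => 2 * q.1 * A q) p v = 2 * p.1 * fderiv ℝ A p v := by
  rw [fderiv_fun_mul_apply (by fun_prop) hA, fderiv_const_mul (by fun_prop), fderiv_fst]
  simp [hv]

theorem heisX_mul (hf : DifferentiableAt ℝ f p) (hg : DifferentiableAt ℝ g p) :
    heisX (fun q => f q * g q) p = f p * heisX g p + g p * heisX f p := by
  simp only [heisX, pdx, pdt, fderiv_fun_mul_apply hf hg]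
  ring

theorem heisY_mul (hf : DifferentiableAt ℝ f p) (hg : DifferentiableAt ℝ g p) :
    heisY (fun q => f q * g q) p = f p * heisY g p + g p * heisY f p := by
  simp only [heisY, pdy, pdt, fderiv_fun_mul_apply hf hg]
  ring

theorem heisX_sub (hf : DifferentiableAt ℝ f p) (hg : DifferentiableAt ℝ g p) :
    heisX (fun q => f q - g q) p = heisX f p - heisX g p := by
  simp only [heisX, pdx, pdt, fderiv_fun_sub_apply hf hg]
  ring

theorem heisY_sub (hf : DifferentiableAt ℝ f p) (hg : DifferentiableAt ℝ g p) :
    heisY (fun q => f q - g q) p = heisY f p - heisY g p := by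
  simp only [heisY, pdy, pdt, fderiv_fun_sub_apply hf hg]
  ring

theorem ContDiffAt.differentiableAt_heisX (hg : ContDiffAt ℝ 2 g p) :
    DifferentiableAt ℝ (heisX g) p :=
  (hg.differentiableAt_fderiv_apply _).add
    ((differentiableAt_snd.fst.const_mul 2).mul (hg.differentiableAt_fderiv_apply _))

theorem ContDiffAt.differentiableAt_heisY (hg : ContDiffAt ℝ 2 g p) :
    DifferentiableAt ℝ (heisY g) p :=
  (hg.differentiableAt_fderiv_apply _).sub
    ((differentiableAt_fst.const_mul 2).mul (hg.differentiableAt_fderiv_apply _))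

/-- `(A, B, 2yA - 2xB)` are the Euclidean components of the field `A X + B Y`. -/
theorem divergence_horizontal (hA : DifferentiableAt ℝ A p) (hB : DifferentiableAt ℝ B p) :
    divergence A B (fun q => 2 * q.2.1 * A q - 2 * q.1 * B q) p = heisX A p + heisY B p := by
  simp only [divergence, heisX, heisY, pdx, pdy, pdt]
  rw [fderiv_fun_sub_apply (by fun_prop) (by fun_prop), fderiv_two_y_mul_apply hA rfl,
    fderiv_two_x_mul_apply hB rfl]
  ring

theorem kohnLaplace_eq_heisX_heisX_add_heisY_heisY (hg : ContDiffAt ℝ 2 g p) :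
    KohnLaplace g p = heisX (heisX g) p + heisY (heisY g) p := by
  have hg' := hg.differentiableAt_fderiv_apply
  unfold KohnLaplace heisX heisY pdx pdy pdt
  rw [fderiv_fun_add_apply (hg' _) (by fun_prop), fderiv_fun_add_apply (hg' _) (by fun_prop),
    fderiv_fun_sub_apply (hg' _) (by fun_prop), fderiv_fun_sub_apply (hg' _) (by fun_prop),
    fderiv_two_y_mul_apply (hg' _) rfl, fderiv_two_y_mul_apply (hg' _) rfl,
    fderiv_two_x_mul_apply (hg' _) rfl, fderiv_two_x_mul_apply (hg' _) rfl,
    hg.fderiv_fderiv_apply_comm (1, 0, 0) (0, 0, 1),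
    hg.fderiv_fderiv_apply_comm (0, 1, 0) (0, 0, 1)]
  ring

theorem divergence_green_current (hf : ContDiffAt ℝ 2 f p) (hg : ContDiffAt ℝ 2 g p) :
    divergence (fun q => f q * heisX g q - g q * heisX f q)
      (fun q => f q * heisY g q - g q * heisY f q)
      (fun q => 2 * q.2.1 * (f q * heisX g q - g q * heisX f q)
        - 2 * q.1 * (f q * heisY g q - g q * heisY f q)) p
      = f p * KohnLaplace g p - g p * KohnLaplace f p := by
  have hf₁ := hf.differentiableAt two_ne_zero
  have hg₁ := hg.differentiableAt two_ne_zero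
  have hfXg := hf₁.fun_mul hg.differentiableAt_heisX
  have hgXf := hg₁.fun_mul hf.differentiableAt_heisX
  have hfYg := hf₁.fun_mul hg.differentiableAt_heisY
  have hgYf := hg₁.fun_mul hf.differentiableAt_heisY
  rw [divergence_horizontal (hfXg.fun_sub hgXf) (hfYg.fun_sub hgYf), heisX_sub hfXg hgXf,
    heisY_sub hfYg hgYf, heisX_mul hf₁ hg.differentiableAt_heisX,
    heisX_mul hg₁ hf.differentiableAt_heisX, heisY_mul hf₁ hg.differentiableAt_heisY,
    heisY_mul hg₁ hf.differentiableAt_heisY, kohnLaplace_eq_heisX_heisX_add_heisY_heisY hf,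
    kohnLaplace_eq_heisX_heisX_add_heisY_heisY hg]
  ring

end Heisenberg

/-- conservation law for the Noether symmetry W_β of the
homogeneous Kohn–Laplace equation: if Δ_{H¹}β = 0 and u is a C² solution of
Δ_{H¹}u = 0 on an open set Ω, then Div(W) = 0 on Ω, where
W₁ = β(u_x + 2y u_t) − u(β_x + 2y β_t),
W₂ = β(u_y − 2x u_t) − u(β_y − 2x β_t),
W₃ = β(−2x u_y + 2y u_x + 4(x²+y²)u_t) + 2u(x β_y − y β_x − 2(x²+y²)β_t). -/
theorem conservation_law_Wbeta_homogeneous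
    (β : ℝ × ℝ × ℝ → ℝ) (hβ : ContDiff ℝ 2 β)
    (hβeq : ∀ p : ℝ × ℝ × ℝ, KohnLaplace β p = 0)
    (Ω : Set (ℝ × ℝ × ℝ)) (hΩ : IsOpen Ω)
    (u : ℝ × ℝ × ℝ → ℝ) (hu : ContDiffOn ℝ 2 u Ω)
    (hsol : ∀ p ∈ Ω, KohnLaplace u p = 0) :
    ∀ p ∈ Ω,
      pdx (fun q =>
        β q * (pdx u q + 2 * q.2.1 * pdt u q)
          - u q * (pdx β q + 2 * q.2.1 * pdt β q)) p
      + pdy (fun q =>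
        β q * (pdy u q - 2 * q.1 * pdt u q)
          - u q * (pdy β q - 2 * q.1 * pdt β q)) p
      + pdt (fun q =>
        β q * (-2 * q.1 * pdy u q + 2 * q.2.1 * pdx u q
            + 4 * (q.1 ^ 2 + q.2.1 ^ 2) * pdt u q)
          + 2 * u q * (q.1 * pdy β q - q.2.1 * pdx β q
            - 2 * (q.1 ^ 2 + q.2.1 ^ 2) * pdt β q)) p = 0 := by
  intro p hp
  have green := divergence_green_current hβ.contDiffAt (hu.contDiffAt (hΩ.mem_nhds hp))
  rw [hsol p hp, hβeq p, mul_zero, mul_zero, sub_zero] at green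
  simp only [divergence, heisX, heisY] at green
  convert green using 3
  funext q
  ring
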